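/- arXiv:1306.2166 — 6 statements merged into one kernel-verified Lean document; each statement's English description precedes it below -/
import Mathlib

section
/- McKean-Singer formula (algebraic form): If D is symmetric, P a symmetric involution with DP = -PD, and L = D^2, then for all t, tr(P exp(-tL)) = tr(P), i.e., the super trace of the heat kernel is constant in t. -/
/-!
Expanding the exponential, `tr (P * exp (c • D ^ 2)) = ∑ₖ cᵏ / k! * tr (P * D ^ (2 * k))`, and
every term with `k ≥ 1` vanishes: moving one factor `D` across `P` costs a sign, and moving it
back around by cyclicity of the trace does not, so `tr (P * D ^ (j + 1)) = -tr (P * D ^ (j + 1))`.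
Only the `k = 0` term `tr P` survives.
-/

open NormedSpace

theorem Matrix.trace_mul_pow_succ_eq_zero_of_anticommute {m R : Type*} [Fintype m] [DecidableEq m]
    [CommRing R] [IsAddTorsionFree R] {D P : Matrix m m R} (hanti : D * P + P * D = 0) (k : ℕ) :
    Matrix.trace (P * D ^ (k + 1)) = 0 := by
  have hPD : P * D = -(D * P) := eq_neg_of_add_eq_zero_right hanti
  refine self_eq_neg.mp ?_
  calc Matrix.trace (P * D ^ (k + 1))
      = Matrix.trace (P * D * D ^ k) := by rw [pow_succ', mul_assoc]
    _ = -Matrix.trace (D * (P * D ^ k)) := by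
        rw [hPD, Matrix.neg_mul, Matrix.trace_neg, mul_assoc]
    _ = -Matrix.trace (P * D ^ k * D) := by rw [Matrix.trace_mul_comm]
    _ = -Matrix.trace (P * D ^ (k + 1)) := by rw [pow_succ, mul_assoc]

theorem LinearMap.map_exp_eq_map_one {𝕂 𝔸 E : Type*} [NontriviallyNormedField 𝕂]
    [CharZero 𝕂] [ContinuousSMul ℚ 𝕂] [NormedRing 𝔸] [NormedAlgebra 𝕂 𝔸] [CompleteSpace 𝔸]
    [AddCommMonoid E] [Module 𝕂 E] [TopologicalSpace E] [T2Space E]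
    (f : 𝔸 →ₗ[𝕂] E) (hf : Continuous f) {x : 𝔸} (hx : ∀ k : ℕ, f (x ^ (k + 1)) = 0) :
    f (exp x) = f 1 := by
  have hsum := (exp_series_hasSum_exp' (𝕂 := 𝕂) x).map f hf
  refine hsum.unique (hasSum_single 0 fun k hk => ?_) |>.trans (by simp)
  obtain ⟨k, rfl⟩ := Nat.exists_eq_succ_of_ne_zero hk
  simp [hx k]

-- `exp` only sees the topology of the matrices; the operator norm is a submultiplicative norm
-- inducing it, under which the exponential series converges.
open scoped Matrix.Norms.Operator in
theorem Matrix.trace_mul_exp_smul_sq_eq_trace {m 𝕂 : Type*} [Fintype m] [DecidableEq m] [RCLike 𝕂]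
    {D P : Matrix m m 𝕂} (hanti : D * P + P * D = 0) (c : 𝕂) :
    Matrix.trace (P * exp (c • D ^ 2)) = Matrix.trace P := by
  let supertrace : Matrix m m 𝕂 →ₗ[𝕂] 𝕂 := Matrix.traceLinearMap m 𝕂 𝕂 ∘ₗ LinearMap.mulLeft 𝕂 P
  have hsuper : ∀ A, supertrace A = Matrix.trace (P * A) := fun _ => rfl
  have key := supertrace.map_exp_eq_map_one supertrace.continuous_of_finiteDimensional
    (x := c • D ^ 2) fun k => by
    rw [hsuper, smul_pow, ← pow_mul, Matrix.mul_smul, Matrix.trace_smul,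
      show 2 * (k + 1) = (2 * k + 1) + 1 by ring,
      Matrix.trace_mul_pow_succ_eq_zero_of_anticommute hanti, smul_zero]
  rwa [hsuper, hsuper, mul_one] at key

theorem stmt_4_general {n : ℕ} (D P : Matrix (Fin n) (Fin n) ℝ)
    (hanti : D * P + P * D = 0)
    (L : Matrix (Fin n) (Fin n) ℝ) (hL : L = D ^ 2) (t : ℝ) :
    Matrix.trace (P * NormedSpace.exp (-(t • L))) = Matrix.trace P := by
  rw [hL, ← neg_smul]
  exact Matrix.trace_mul_exp_smul_sq_eq_trace hanti (-t)

theorem stmt_4 {n : ℕ} (D P : Matrix (Fin n) (Fin n) ℝ)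
    (hD : D.IsSymm) (hP : P.IsSymm) (hP2 : P * P = 1) (hanti : D * P + P * D = 0)
    (L : Matrix (Fin n) (Fin n) ℝ) (hL : L = D ^ 2) (t : ℝ) :
    Matrix.trace (P * NormedSpace.exp (-(t • L))) = Matrix.trace P :=
  stmt_4_general D P hanti L hL t
end

section
/- If D is symmetric, P is a symmetric involution with DP = -PD, and f is an analytic (entire) function with f(0) = 0, then tr(P exp(f(D))) = tr(P). -/
/-!
Anticommutation makes `X ↦ tr (P * (D * X))` vanish on the commutant of `D`: if `D` commutes
with `M`, cycling the trace gives `tr (P D M) = tr (D P M) = -tr (P D M)`. Since `f` has no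
constant term and `f(D)` commutes with `D`, expanding the first factor of
`f(D)^k = f(D) * f(D)^(k-1)` termwise gives `tr (P f(D)^k) = 0` for every `k ≥ 1`, and only the
constant term of the exponential series survives the trace against `P`.
-/

open NormedSpace
open scoped Nat

namespace Matrix

variable {m R : Type*} [Fintype m] [DecidableEq m] [CommRing R]

theorem trace_mul_mul_eq_zero_of_anticommute [NoZeroDivisors R] [CharZero R]
    {D P M : Matrix m m R} (hDP : D * P + P * D = 0) (hDM : Commute D M) :
    trace (P * (D * M)) = 0 := by
  have h : trace (P * (D * M)) + trace (P * (D * M)) = trace ((D * P + P * D) * M) := by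
    rw [add_mul, trace_add, mul_assoc D, trace_mul_comm D, mul_assoc P M, ← hDM.eq,
      mul_assoc P D]
  rwa [hDP, zero_mul, trace_zero, add_self_eq_zero] at h

theorem trace_mul_pow_mul_eq_zero_of_anticommute [NoZeroDivisors R] [CharZero R]
    {D P M : Matrix m m R} (hDP : D * P + P * D = 0) (hDM : Commute D M) {k : ℕ} (hk : k ≠ 0) :
    trace (P * (D ^ k * M)) = 0 := by
  obtain ⟨j, rfl⟩ := Nat.exists_eq_succ_of_ne_zero hk
  rw [pow_succ', mul_assoc]
  exact trace_mul_mul_eq_zero_of_anticommute hDP (((Commute.refl D).pow_right j).mul_right hDM)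

variable [TopologicalSpace R] [IsTopologicalRing R] [T2Space R]

theorem commute_tsum_smul_pow (D : Matrix m m R) (c : ℕ → R) :
    Commute D (∑' k, c k • D ^ k) :=
  Commute.tsum_right D fun k => ((Commute.refl D).pow_right k).smul_right (c k)

theorem trace_mul_tsum_smul_pow_mul_eq_zero [NoZeroDivisors R] [CharZero R]
    {D P M : Matrix m m R} (hDP : D * P + P * D = 0) (hDM : Commute D M)
    {c : ℕ → R} (hc0 : c 0 = 0) (hc : Summable fun k => c k • D ^ k) :
    trace (P * ((∑' k, c k • D ^ k) * M)) = 0 := by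
  have hsum : HasSum (fun k => trace (P * ((c k • D ^ k) * M)))
      (trace (P * ((∑' k, c k • D ^ k) * M))) :=
    ((hc.hasSum.mul_right M).mul_left P).map (traceAddMonoidHom m R)
      continuous_id.matrix_trace
  have hterm : ∀ k, trace (P * ((c k • D ^ k) * M)) = 0 := by
    intro k
    rw [Matrix.smul_mul, Matrix.mul_smul, trace_smul]
    rcases eq_or_ne k 0 with rfl | hk
    · rw [hc0, zero_smul]
    · rw [trace_mul_pow_mul_eq_zero_of_anticommute hDP hDM hk, smul_zero]
  simp only [hterm] at hsum
  exact hsum.unique hasSum_zero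

theorem trace_mul_pow_tsum_smul_pow_eq_zero [NoZeroDivisors R] [CharZero R]
    {D P : Matrix m m R} (hDP : D * P + P * D = 0)
    {c : ℕ → R} (hc0 : c 0 = 0) (hc : Summable fun k => c k • D ^ k) {k : ℕ} (hk : k ≠ 0) :
    trace (P * (∑' k, c k • D ^ k) ^ k) = 0 := by
  obtain ⟨j, rfl⟩ := Nat.exists_eq_succ_of_ne_zero hk
  rw [pow_succ']
  exact trace_mul_tsum_smul_pow_mul_eq_zero hDP ((commute_tsum_smul_pow D c).pow_right j) hc0 hc

section Exponential

variable {𝕂 : Type*} [RCLike 𝕂]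

theorem hasSum_exp (A : Matrix m m 𝕂) :
    HasSum (fun k => ((k ! : 𝕂)⁻¹) • A ^ k) (exp A) :=
  open scoped Norms.Operator in exp_series_hasSum_exp' A

theorem trace_mul_exp_eq_trace {A P : Matrix m m 𝕂} (h : ∀ k ≠ 0, trace (P * A ^ k) = 0) :
    trace (P * exp A) = trace P := by
  have hsum : HasSum (fun k => trace (P * (((k ! : 𝕂)⁻¹) • A ^ k))) (trace (P * exp A)) :=
    ((hasSum_exp A).mul_left P).map (traceAddMonoidHom m 𝕂) continuous_id.matrix_trace
  refine hsum.unique ((hasSum_single 0 fun k hk => ?_).trans_eq ?_)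
  · rw [Matrix.mul_smul, trace_smul, h k hk, smul_zero]
  · simp

end Exponential

end Matrix

/-- `f(D)` is the sum `∑' k, c k • D ^ k` of the power series of `f`; `c 0 = 0` encodes
`f 0 = 0`. -/
theorem stmt_5_general {n : ℕ} (D P : Matrix (Fin n) (Fin n) ℝ)
    (hanti : D * P + P * D = 0)
    (c : ℕ → ℝ) (hc0 : c 0 = 0)
    (hconv : Summable (fun k => c k • D ^ k)) :
    Matrix.trace (P * NormedSpace.exp (∑' k, c k • D ^ k)) = Matrix.trace P :=
  Matrix.trace_mul_exp_eq_trace fun _ hk =>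
    Matrix.trace_mul_pow_tsum_smul_pow_eq_zero hanti hc0 hconv hk

/-- An entire function `f` with `f 0 = 0` is represented by an everywhere
convergent power series with zero constant coefficient; `f(D)` is the sum
`∑' k, c k • D ^ k` of that series applied to the matrix `D`. -/
theorem stmt_5 {n : ℕ} (D P : Matrix (Fin n) (Fin n) ℝ)
    (hD : D.IsSymm) (hP : P.IsSymm) (hP2 : P * P = 1) (hanti : D * P + P * D = 0)
    (c : ℕ → ℝ) (hc0 : c 0 = 0)
    (hconv : Summable (fun k => c k • D ^ k)) :
    Matrix.trace (P * NormedSpace.exp (∑' k, c k • D ^ k)) = Matrix.trace P :=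
  stmt_5_general D P hanti c hc0 hconv
end

section
/- Hodge theorem (linear algebra version): With d^2 = 0 and L = dd* + d*d, every vector f with df = 0 can be written uniquely as f = du + h where h ∈ ker(L); consequently ker(d)/im(d) ≅ ker(L). -/
open Matrix LinearMap

private lemma aux_nn {n : ℕ} (v : Fin n → ℝ) : 0 ≤ v ⬝ᵥ v :=
  Finset.sum_nonneg fun i _ => mul_self_nonneg _

private lemma aux_range {n : ℕ} (A : Matrix (Fin n) (Fin n) ℝ) :
    LinearMap.range (Aᵀ * A).mulVecLin = LinearMap.range Aᵀ.mulVecLin := by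
  apply Submodule.eq_of_le_of_finrank_eq
  · rintro x ⟨v, rfl⟩
    exact ⟨A.mulVec v, by simp [mulVecLin_mul]⟩
  · change (Aᵀ * A).rank = Aᵀ.rank
    rw [Matrix.rank_transpose_mul_self, Matrix.rank_transpose]

private lemma aux_perp {n : ℕ} (d : Matrix (Fin n) (Fin n) ℝ) (v : Fin n → ℝ)
    (h1 : dᵀ.mulVec v = 0) (h2 : ∃ u, v = d.mulVec u) : v = 0 := by
  obtain ⟨u, rfl⟩ := h2
  rw [← dotProduct_self_eq_zero (v := d.mulVec u)]
  rw [Matrix.dotProduct_mulVec, ← Matrix.mulVec_transpose, h1, zero_dotProduct]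

set_option synthInstance.maxHeartbeats 1000000 in
set_option maxHeartbeats 2000000 in
/-- Hodge theorem: every cocycle `f` (i.e. `df = 0`) is uniquely `f = du + h`
with `h` harmonic, and `ker d / im d ≅ ker L`. -/
theorem stmt_9 {n : ℕ} (d : Matrix (Fin n) (Fin n) ℝ) (hd : d * d = 0)
    (L : Matrix (Fin n) (Fin n) ℝ) (hL : L = d * d.transpose + d.transpose * d)
    :
    (∀ f : Fin n → ℝ, d.mulVec f = 0 →
        ∃! h : Fin n → ℝ, L.mulVec h = 0 ∧ ∃ u, f = d.mulVec u + h) ∧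
    Nonempty ((LinearMap.ker (Matrix.toLin' d) ⧸
        (LinearMap.range (Matrix.toLin' d)).comap
          (LinearMap.ker (Matrix.toLin' d)).subtype) ≃ₗ[ℝ]
      LinearMap.ker (Matrix.toLin' L)) := by
  -- ker(dᵀd) = ker d
  have hker : ∀ v : Fin n → ℝ, (dᵀ * d).mulVec v = 0 → d.mulVec v = 0 := by
    intro v hv
    have h := Matrix.ker_mulVecLin_transpose_mul_self d
    have hv' : v ∈ LinearMap.ker (dᵀ * d).mulVecLin := hv
    rw [h] at hv'
    exact hv'
  -- ker L = ker d ∩ ker dᵀ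
  have hLker : ∀ v : Fin n → ℝ, L.mulVec v = 0 ↔ d.mulVec v = 0 ∧ dᵀ.mulVec v = 0 := by
    intro v
    constructor
    · intro hv
      have key : v ⬝ᵥ L.mulVec v = dᵀ.mulVec v ⬝ᵥ dᵀ.mulVec v + d.mulVec v ⬝ᵥ d.mulVec v := by
        rw [hL, Matrix.add_mulVec, dotProduct_add]
        rw [← Matrix.mulVec_mulVec, ← Matrix.mulVec_mulVec]
        rw [Matrix.dotProduct_mulVec v d, Matrix.dotProduct_mulVec v dᵀ]
        rw [← Matrix.mulVec_transpose, ← Matrix.mulVec_transpose, Matrix.transpose_transpose]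
      rw [hv, dotProduct_zero] at key
      have h1 := aux_nn (dᵀ.mulVec v)
      have h2 := aux_nn (d.mulVec v)
      constructor
      · rw [← dotProduct_self_eq_zero]; linarith
      · rw [← dotProduct_self_eq_zero]; linarith
    · rintro ⟨h1, h2⟩
      rw [hL, Matrix.add_mulVec, ← Matrix.mulVec_mulVec, ← Matrix.mulVec_mulVec, h1, h2,
        Matrix.mulVec_zero, Matrix.mulVec_zero, add_zero]
  -- existence of decomposition
  have hdecomp : ∀ f : Fin n → ℝ, d.mulVec f = 0 →
      ∃ u, L.mulVec (f - d.mulVec u) = 0 := by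
    intro f hf
    -- find u with dᵀ d u = dᵀ f
    have hmem : dᵀ.mulVec f ∈ LinearMap.range (dᵀ * d).mulVecLin := by
      rw [aux_range]
      exact ⟨f, rfl⟩
    obtain ⟨u, hu⟩ := hmem
    refine ⟨u, (hLker _).2 ⟨?_, ?_⟩⟩
    · -- dᵀ d (f - du) = 0, so d (f - du) = 0
      apply hker
      have e1 : (dᵀ * d).mulVec f = 0 := by
        rw [← Matrix.mulVec_mulVec, hf, Matrix.mulVec_zero]
      have e2 : (dᵀ * d).mulVec (d.mulVec u) = 0 := by
        rw [Matrix.mulVec_mulVec, Matrix.mul_assoc, hd, Matrix.mul_zero, Matrix.zero_mulVec]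
      rw [Matrix.mulVec_sub, e1, e2, sub_zero]
    · rw [Matrix.mulVec_sub, Matrix.mulVec_mulVec]
      have : (dᵀ * d).mulVecLin u = (dᵀ * d).mulVec u := rfl
      rw [this] at hu
      rw [hu, sub_self]
  constructor
  · intro f hf
    obtain ⟨u, hu⟩ := hdecomp f hf
    refine ⟨f - d.mulVec u, ⟨hu, u, by ring⟩, ?_⟩
    rintro h' ⟨hh', u', rfl⟩
    have hLh : L.mulVec (d.mulVec u' + h' - d.mulVec u) = 0 := hu
    have h'' := (hLker _).1 hh'
    have h3 := (hLker _).1 hLh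
    have hdiff : (d.mulVec u' + h' - d.mulVec u) - h' = d.mulVec (u' - u) := by
      rw [Matrix.mulVec_sub]; ring
    have hw : dᵀ.mulVec ((d.mulVec u' + h' - d.mulVec u) - h') = 0 := by
      rw [Matrix.mulVec_sub, h3.2, h''.2, sub_zero]
    have hz := aux_perp d _ hw ⟨u' - u, hdiff⟩
    exact (sub_eq_zero.mp hz).symm
  · -- dimension count
    set K := LinearMap.ker (Matrix.toLin' d) with hK
    set R := (LinearMap.range (Matrix.toLin' d)) with hR
    have hmemK : ∀ v : Fin n → ℝ, v ∈ K ↔ d.mulVec v = 0 := by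
      intro v; simp [hK, LinearMap.mem_ker, Matrix.toLin'_apply]
    have hmemR : ∀ v : Fin n → ℝ, v ∈ R ↔ ∃ u, v = d.mulVec u := by
      intro v
      constructor
      · rintro ⟨u, rfl⟩; exact ⟨u, by simp [Matrix.toLin'_apply]⟩
      · rintro ⟨u, rfl⟩; exact ⟨u, by simp [Matrix.toLin'_apply]⟩
    have hRK : R ≤ K := by
      intro v hv
      obtain ⟨u, rfl⟩ := (hmemR v).1 hv
      rw [hmemK, Matrix.mulVec_mulVec, hd, Matrix.zero_mulVec]
    set H := LinearMap.ker (Matrix.toLin' L) with hH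
    have hmemH : ∀ v : Fin n → ℝ, v ∈ H ↔ d.mulVec v = 0 ∧ dᵀ.mulVec v = 0 := by
      intro v
      rw [hH, LinearMap.mem_ker]
      rw [show Matrix.toLin' L v = L.mulVec v from rfl]
      exact hLker v
    have hsup : H ⊔ R = K := by
      apply le_antisymm
      · apply sup_le
        · intro v hv; rw [hmemK]; exact ((hmemH v).1 hv).1
        · exact hRK
      · intro f hf
        obtain ⟨u, hu⟩ := hdecomp f ((hmemK f).1 hf)
        have h1 : (f - d.mulVec u) ∈ H := (hmemH _).2 ((hLker _).1 hu)
        have h2 : d.mulVec u ∈ R := (hmemR _).2 ⟨u, rfl⟩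
        have : f = (f - d.mulVec u) + d.mulVec u := by ring
        rw [this]
        exact Submodule.add_mem_sup h1 h2
    have hinf : H ⊓ R = ⊥ := by
      rw [eq_bot_iff]
      rintro v ⟨hv1, hv2⟩
      have := aux_perp d v ((hmemH v).1 hv1).2 ((hmemR v).1 hv2)
      simp [this]
    have e1 := Submodule.finrank_sup_add_finrank_inf_eq H R
    rw [hsup, hinf, finrank_bot, add_zero] at e1
    have e2 := Submodule.finrank_quotient_add_finrank (R.comap K.subtype)
    have e3 : Module.finrank ℝ (R.comap K.subtype) = Module.finrank ℝ R :=
      (Submodule.comapSubtypeEquivOfLe hRK).finrank_eq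
    refine ⟨LinearEquiv.ofFinrankEq _ _ ?_⟩
    have e4 : Module.finrank ℝ K = Module.finrank ℝ H + Module.finrank ℝ R := e1
    omega
end

section
/- Lidskii-type inequality: If A and B are real symmetric n×n matrices with eigenvalues α_1 ≤ ... ≤ α_n and β_1 ≤ ... ≤ β_n respectively, then Σ_j |α_j - β_j| ≤ Σ_{i,j} |(A-B)_{ij}|. -/
/-!
Let `D = A - B` and `C = B + D⁺`. Then `A ≤ C` and `B ≤ C` in the Loewner order, since
`C - A = D⁻` and `C - B = D⁺`, so by Weyl's monotonicity theorem `αⱼ, βⱼ ≤ γⱼ` for the sorted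
eigenvalues `γ` of `C`. Hence `Σ |αⱼ - βⱼ| ≤ Σ (2γⱼ - αⱼ - βⱼ) = 2 tr C - tr A - tr B
= tr D⁺ + tr D⁻ = Σ |λᵢ(D)|`. Finally `λᵢ(D) = uᵢᵀ D uᵢ` for orthonormal eigenvectors `uᵢ`, so
`Σᵢ |λᵢ(D)| ≤ Σ_{a,b} |D_{ab}| Σᵢ |uᵢ(a)| |uᵢ(b)|`, and the inner sum is at most `1` by
Cauchy–Schwarz on two rows of the orthogonal matrix with columns `uᵢ`.

Weyl's theorem is proved by the Courant–Fischer dimension count: the span of the top `i + 1`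
eigenvectors of `T` meets the span of the bottom `n - i` eigenvectors of `S`.
-/

open Module Submodule RCLike Polynomial

theorem Module.Basis.finrank_span_image {ι K V : Type*} [Finite ι] [DivisionRing K]
    [AddCommGroup V] [Module K V] (b : Basis ι K V) (s : Set ι) :
    finrank K (span K (b '' s)) = s.ncard := by
  classical
  have := Fintype.ofFinite ι
  rw [finrank_span_set_eq_card (b.linearIndepOn s).id_image, Set.toFinset_card,
    Fintype.card_eq_nat_card, Nat.card_coe_set_eq]
  exact Set.ncard_image_of_injective s b.injective

theorem Module.Basis.exists_ne_zero_mem_span_image_of_finrank_lt {ι ι' K V : Type*} [Finite ι]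
    [Finite ι'] [DivisionRing K] [AddCommGroup V] [Module K V] [FiniteDimensional K V]
    (b : Basis ι K V) (b' : Basis ι' K V) {s : Set ι} {t : Set ι'}
    (hst : finrank K V < s.ncard + t.ncard) :
    ∃ x ≠ 0, x ∈ span K (b '' s) ∧ x ∈ span K (b' '' t) := by
  by_contra! h
  refine (finrank_add_finrank_le_of_disjoint (disjoint_def.mpr fun x hx hx' => ?_)).not_gt
    (b.finrank_span_image s ▸ b'.finrank_span_image t ▸ hst)
  by_contra hx0
  exact h x hx0 hx hx'

theorem OrthonormalBasis.repr_eq_zero_of_mem_span_image {ι 𝕜 E : Type*} [Fintype ι] [RCLike 𝕜]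
    [NormedAddCommGroup E] [InnerProductSpace 𝕜 E] (b : OrthonormalBasis ι 𝕜 E) {s : Set ι}
    {x : E} (hx : x ∈ span 𝕜 (b '' s)) {k : ι} (hk : k ∉ s) : b.repr x k = 0 := by
  have hsupp := b.toBasis.mem_span_image.mp (by simpa using hx)
  simpa using Finsupp.notMem_support_iff.mp fun h => hk (hsupp h)

namespace LinearMap.IsSymmetric

variable {𝕜 E : Type*} [RCLike 𝕜] [NormedAddCommGroup E] [InnerProductSpace 𝕜 E]
  [FiniteDimensional 𝕜 E] {n : ℕ} (hn : finrank 𝕜 E = n) {T : E →ₗ[𝕜] E} (hT : T.IsSymmetric)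

local notation "⟪" x ", " y "⟫" => inner 𝕜 x y

theorem re_inner_apply_self_eq_sum (x : E) :
    re ⟪T x, x⟫ = ∑ k, hT.eigenvalues hn k * ‖(hT.eigenvectorBasis hn).repr x k‖ ^ 2 := by
  rw [← (hT.eigenvectorBasis hn).repr.inner_map_map, PiLp.inner_apply, map_sum]
  refine Finset.sum_congr rfl fun k _ => ?_
  rw [eigenvectorBasis_apply_self_apply, ← smul_eq_mul, inner_smul_left, RCLike.conj_ofReal,
    RCLike.re_ofReal_mul, inner_self_eq_norm_sq]

theorem re_inner_apply_self_le_of_mem_span_Ici {i : Fin n} {x : E}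
    (hx : x ∈ span 𝕜 (hT.eigenvectorBasis hn '' Set.Ici i)) :
    re ⟪T x, x⟫ ≤ hT.eigenvalues hn i * ‖x‖ ^ 2 := by
  rw [re_inner_apply_self_eq_sum hn hT, ← (hT.eigenvectorBasis hn).repr.norm_map,
    EuclideanSpace.norm_sq_eq, Finset.mul_sum]
  refine Finset.sum_le_sum fun k _ => ?_
  by_cases hik : i ≤ k
  · exact mul_le_mul_of_nonneg_right (hT.eigenvalues_antitone hn hik) (sq_nonneg _)
  · simp [OrthonormalBasis.repr_eq_zero_of_mem_span_image _ hx hik]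

theorem le_re_inner_apply_self_of_mem_span_Iic {i : Fin n} {x : E}
    (hx : x ∈ span 𝕜 (hT.eigenvectorBasis hn '' Set.Iic i)) :
    hT.eigenvalues hn i * ‖x‖ ^ 2 ≤ re ⟪T x, x⟫ := by
  rw [re_inner_apply_self_eq_sum hn hT, ← (hT.eigenvectorBasis hn).repr.norm_map,
    EuclideanSpace.norm_sq_eq, Finset.mul_sum]
  refine Finset.sum_le_sum fun k _ => ?_
  by_cases hki : k ≤ i
  · exact mul_le_mul_of_nonneg_right (hT.eigenvalues_antitone hn hki) (sq_nonneg _)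
  · simp [OrthonormalBasis.repr_eq_zero_of_mem_span_image _ hx hki]

theorem eigenvalues_le_of_le {S : E →ₗ[𝕜] E} (hS : S.IsSymmetric) (hTS : T ≤ S) (i : Fin n) :
    hT.eigenvalues hn i ≤ hS.eigenvalues hn i := by
  obtain ⟨x, hx0, hxT, hxS⟩ :=
    (hT.eigenvectorBasis hn).toBasis.exists_ne_zero_mem_span_image_of_finrank_lt
      (hS.eigenvectorBasis hn).toBasis (s := Set.Iic i) (t := Set.Ici i)
      (by
        simp only [hn, Set.ncard_eq_toFinset_card', Set.toFinset_Iic, Fin.card_Iic,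
          Set.toFinset_Ici, Fin.card_Ici]
        omega)
  simp only [OrthonormalBasis.coe_toBasis] at hxT hxS
  have hquad : re ⟪T x, x⟫ ≤ re ⟪S x, x⟫ := by
    have := hTS.re_inner_nonneg_left x
    rwa [sub_apply, inner_sub_left, map_sub, sub_nonneg] at this
  have hx : 0 < ‖x‖ ^ 2 := by positivity
  exact le_of_mul_le_mul_right ((le_re_inner_apply_self_of_mem_span_Iic hn hT hxT).trans
    (hquad.trans (re_inner_apply_self_le_of_mem_span_Ici hn hS hxS))) hx

end LinearMap.IsSymmetric

theorem Polynomial.eq_of_monotone_of_prod_X_sub_C_eq {R : Type*} [CommRing R] [IsDomain R]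
    [LinearOrder R] {n : ℕ} {α β : Fin n → R} (hα : Monotone α) (hβ : Monotone β)
    (h : ∏ i, (X - C (α i)) = ∏ i, (X - C (β i))) : α = β := by
  have roots_eq (γ : Fin n → R) : (∏ i, (X - C (γ i))).roots = (List.ofFn γ : Multiset R) := by
    rw [Finset.prod_eq_multiset_prod, ← Function.comp_def (fun a => X - C a) γ, ← Multiset.map_map,
      roots_multiset_prod_X_sub_C, Fin.univ_val_map]
  have hperm : (List.ofFn α).Perm (List.ofFn β) := by
    rw [← Multiset.coe_eq_coe, ← roots_eq, ← roots_eq, h]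
  exact List.ofFn_injective <| hperm.eq_of_sortedLE
    hα.sortedLE_ofFn hβ.sortedLE_ofFn

theorem Matrix.trace_eq_sum_of_charpoly_eq_prod {R ι κ : Type*} [CommRing R] [Fintype ι]
    [DecidableEq ι] [Fintype κ] {M : Matrix ι ι R} {γ : κ → R}
    (h : M.charpoly = ∏ i, (X - C (γ i))) : M.trace = ∑ i, γ i := by
  rw [trace_eq_neg_charpoly_nextCoeff, h, prod_X_sub_C_nextCoeff, neg_neg]

theorem Matrix.charpoly_toEuclideanLin {𝕜 ι : Type*} [RCLike 𝕜] [Fintype ι] [DecidableEq ι]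
    (A : Matrix ι ι 𝕜) : (toEuclideanLin A).charpoly = A.charpoly :=
  Matrix.charpoly_toLin A (PiLp.basisFun 2 𝕜 ι)

namespace Matrix.IsHermitian

variable {n : ℕ} {A B : Matrix (Fin n) (Fin n) ℝ}

/-- `LinearMap.IsSymmetric.eigenvalues` lists the eigenvalues in decreasing order, hence the
`Fin.rev`. -/
noncomputable def sortedEigenvalues (hA : A.IsHermitian) : Fin n → ℝ := fun i =>
  (isSymmetric_toEuclideanLin_iff.mpr hA).eigenvalues finrank_euclideanSpace_fin i.rev

theorem sortedEigenvalues_monotone (hA : A.IsHermitian) : Monotone hA.sortedEigenvalues :=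
  fun _ _ hij => LinearMap.IsSymmetric.eigenvalues_antitone _ _ (Fin.rev_le_rev.mpr hij)

theorem charpoly_eq_prod_sortedEigenvalues (hA : A.IsHermitian) :
    A.charpoly = ∏ i, (X - C (hA.sortedEigenvalues i)) := by
  rw [← charpoly_toEuclideanLin,
    (isSymmetric_toEuclideanLin_iff.mpr hA).charpoly_eq finrank_euclideanSpace_fin]
  exact (Fintype.prod_equiv Fin.revPerm _ _ fun _ => by simp [sortedEigenvalues]).symm

theorem eq_sortedEigenvalues (hA : A.IsHermitian) {α : Fin n → ℝ} (hα : Monotone α)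
    (h : A.charpoly = ∏ i, (X - C (α i))) : α = hA.sortedEigenvalues :=
  eq_of_monotone_of_prod_X_sub_C_eq hα hA.sortedEigenvalues_monotone
    (h ▸ hA.charpoly_eq_prod_sortedEigenvalues)

theorem sortedEigenvalues_le_of_posSemidef (hA : A.IsHermitian) (hB : B.IsHermitian)
    (hAB : (B - A).PosSemidef) (i : Fin n) : hA.sortedEigenvalues i ≤ hB.sortedEigenvalues i :=
  LinearMap.IsSymmetric.eigenvalues_le_of_le _ _ _
    (by rwa [LinearMap.le_def, ← map_sub, isPositive_toEuclideanLin_iff]) _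

theorem trace_eq_sum_sortedEigenvalues (hA : A.IsHermitian) :
    A.trace = ∑ i, hA.sortedEigenvalues i :=
  trace_eq_sum_of_charpoly_eq_prod hA.charpoly_eq_prod_sortedEigenvalues

open scoped MatrixOrder in
theorem sum_abs_sub_sortedEigenvalues_le (hA : A.IsHermitian) (hB : B.IsHermitian) :
    ∑ j, |hA.sortedEigenvalues j - hB.sortedEigenvalues j| ≤
      ((A - B)⁺).trace + ((A - B)⁻).trace := by
  have hpos := nonneg_iff_posSemidef.mp (CFC.posPart_nonneg (A - B))
  have hneg := nonneg_iff_posSemidef.mp (CFC.negPart_nonneg (A - B))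
  have hdecomp : (A - B)⁺ - (A - B)⁻ = A - B :=
    CFC.posPart_sub_negPart _ (hA.sub hB).isSelfAdjoint
  have hC : (B + (A - B)⁺).IsHermitian := hB.add hpos.isHermitian
  have hAC := hA.sortedEigenvalues_le_of_posSemidef hC (by
    rwa [show B + (A - B)⁺ - A = (A - B)⁻ by rw [← sub_eq_zero, ← sub_eq_zero.mpr hdecomp]; abel])
  have hBC := hB.sortedEigenvalues_le_of_posSemidef hC (by rwa [add_sub_cancel_left])
  calc ∑ j, |hA.sortedEigenvalues j - hB.sortedEigenvalues j|
      ≤ ∑ j, (2 * hC.sortedEigenvalues j - hA.sortedEigenvalues j - hB.sortedEigenvalues j) :=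
        Finset.sum_le_sum fun j _ =>
          abs_sub_le_iff.mpr ⟨by linarith [hBC j, hAC j], by linarith [hAC j, hBC j]⟩
    _ = ((A - B)⁺).trace + ((A - B)⁻).trace := by
        have htr := congrArg trace hdecomp
        simp only [Finset.sum_sub_distrib, ← Finset.mul_sum, ← trace_eq_sum_sortedEigenvalues,
          trace_add, trace_sub] at htr ⊢
        linarith

end Matrix.IsHermitian

namespace Matrix

variable {𝕜 ι : Type*} [RCLike 𝕜] [Fintype ι] [DecidableEq ι]

theorem IsHermitian.trace_cfc {D : Matrix ι ι 𝕜} (hD : D.IsHermitian) (f : ℝ → ℝ) :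
    (cfc f D).trace = ∑ i, (f (hD.eigenvalues i) : 𝕜) :=
  trace_eq_sum_of_charpoly_eq_prod (hD.charpoly_cfc_eq f)

theorem IsHermitian.trace_posPart_add_trace_negPart {D : Matrix ι ι 𝕜} (hD : D.IsHermitian) :
    (D⁺).trace + (D⁻).trace = ∑ i, ((|hD.eigenvalues i| : ℝ) : 𝕜) := by
  rw [CFC.posPart_def, CFC.negPart_def, cfcₙ_eq_cfc, cfcₙ_eq_cfc, hD.trace_cfc, hD.trace_cfc,
    ← Finset.sum_add_distrib]
  simp only [← RCLike.ofReal_add, posPart_add_negPart]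

theorem sum_norm_mul_norm_le_one_of_mem_unitaryGroup {U : Matrix ι ι 𝕜}
    (hU : U ∈ unitaryGroup ι 𝕜) (a b : ι) : ∑ i, ‖U a i‖ * ‖U b i‖ ≤ 1 := by
  have row (a : ι) : ∑ i, ‖U a i‖ ^ 2 = 1 := by
    have h : (U * Uᴴ) a a = ((∑ i, ‖U a i‖ ^ 2 : ℝ) : 𝕜) := by
      simp only [mul_apply, conjTranspose_apply, ← starRingEnd_apply, RCLike.mul_conj]
      norm_cast
    rwa [← star_eq_conjTranspose, mem_unitaryGroup_iff.mp hU, one_apply_eq, ← RCLike.ofReal_one,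
      RCLike.ofReal_inj, eq_comm] at h
  have := Finset.sum_mul_sq_le_sq_mul_sq Finset.univ (fun i => ‖U a i‖) (fun i => ‖U b i‖)
  rw [row, row, one_mul] at this
  exact (abs_le_of_sq_le_sq' (by rwa [one_pow]) zero_le_one).2

theorem IsHermitian.abs_eigenvalues_le {D : Matrix ι ι 𝕜} (hD : D.IsHermitian) (i : ι) :
    |hD.eigenvalues i| ≤ ∑ a, ∑ b, ‖D a b‖ * (‖(hD.eigenvectorUnitary : Matrix ι ι 𝕜) a i‖ *
      ‖(hD.eigenvectorUnitary : Matrix ι ι 𝕜) b i‖) := by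
  set v := ⇑(hD.eigenvectorBasis i)
  calc |hD.eigenvalues i| ≤ ‖star v ⬝ᵥ (D *ᵥ v)‖ := by
        rw [hD.eigenvalues_eq]; exact RCLike.abs_re_le_norm _
    _ ≤ ∑ a, ‖v a‖ * ∑ b, ‖D a b‖ * ‖v b‖ := by
        refine (norm_sum_le _ _).trans (Finset.sum_le_sum fun a _ => ?_)
        rw [norm_mul, Pi.star_apply, norm_star]
        refine mul_le_mul_of_nonneg_left ((norm_sum_le _ _).trans_eq ?_) (norm_nonneg _)
        simp only [norm_mul]
    _ = _ := by
        simp only [eigenvectorUnitary_apply, Finset.mul_sum, v]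
        refine Finset.sum_congr rfl fun a _ => Finset.sum_congr rfl fun b _ => by ring

theorem IsHermitian.sum_abs_eigenvalues_le {D : Matrix ι ι 𝕜} (hD : D.IsHermitian) :
    ∑ i, |hD.eigenvalues i| ≤ ∑ a, ∑ b, ‖D a b‖ := by
  set U := (hD.eigenvectorUnitary : Matrix ι ι 𝕜)
  calc ∑ i, |hD.eigenvalues i| ≤ ∑ i, ∑ a, ∑ b, ‖D a b‖ * (‖U a i‖ * ‖U b i‖) :=
        Finset.sum_le_sum fun i _ => hD.abs_eigenvalues_le i
    _ = ∑ a, ∑ b, ‖D a b‖ * ∑ i, ‖U a i‖ * ‖U b i‖ := by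
        simp only [Finset.mul_sum]
        rw [Finset.sum_comm]
        exact Finset.sum_congr rfl fun a _ => Finset.sum_comm
    _ ≤ ∑ a, ∑ b, ‖D a b‖ := by
        gcongr with a _ b _
        exact mul_le_of_le_one_right (norm_nonneg _)
          (sum_norm_mul_norm_le_one_of_mem_unitaryGroup hD.eigenvectorUnitary.2 a b)

end Matrix

open scoped MatrixOrder in
/-- Lidskii-type inequality: eigenvalues (with multiplicity, in increasing order,
encoded through the characteristic polynomials) of symmetric `A, B` satisfy
`Σ|αⱼ - βⱼ| ≤ Σᵢⱼ |(A-B)ᵢⱼ|`. -/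
theorem stmt_11 {n : ℕ} (A B : Matrix (Fin n) (Fin n) ℝ)
    (hA : A.IsSymm) (hB : B.IsSymm)
    (α β : Fin n → ℝ) (hαm : Monotone α) (hβm : Monotone β)
    (hAchar : A.charpoly = ∏ i, (X - C (α i)))
    (hBchar : B.charpoly = ∏ i, (X - C (β i))) :
    ∑ j, |α j - β j| ≤ ∑ i, ∑ j, |(A - B) i j| := by
  have hAH : A.IsHermitian := Matrix.isHermitian_iff_isSymm.mpr hA
  have hBH : B.IsHermitian := Matrix.isHermitian_iff_isSymm.mpr hB
  obtain rfl := hAH.eq_sortedEigenvalues hαm hAchar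
  obtain rfl := hBH.eq_sortedEigenvalues hβm hBchar
  have hD : (A - B).IsHermitian := hAH.sub hBH
  calc ∑ j, |hAH.sortedEigenvalues j - hBH.sortedEigenvalues j|
      ≤ ((A - B)⁺).trace + ((A - B)⁻).trace := hAH.sum_abs_sub_sortedEigenvalues_le hBH
    _ = ∑ i, |hD.eigenvalues i| := by simpa using hD.trace_posPart_add_trace_negPart
    _ ≤ ∑ i, ∑ j, |(A - B) i j| := by simpa using hD.sum_abs_eigenvalues_le
end

section
/- Pythagoras theorem for pseudo determinants: If A is a real symmetric n×n matrix of rank k, then Det(A)^2 = Σ_P det(A_P)^2, where Det(A) is the product of the nonzero eigenvalues of A and the sum is over all k×k submatrices A_P of A obtained by choosing any k rows and any k columns. -/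
/-!
Diagonalize `A = U D Uᵀ` with `U` orthogonal and `D = diag λ`. By Cauchy–Binet, the `k`-th
compound matrix `C(M) = (det M_{IJ})_{I,J}`, indexed by `k`-subsets, is multiplicative and
commutes with transposition, so `C(A) = C(U) C(D) C(U)ᵀ` with `C(U)` orthogonal and `C(D)`
diagonal with entries `∏_{i ∈ I} λ_i`. The sum of the squared `k × k` minors of `A` is the
squared Frobenius norm of `C(A)`, which is invariant under orthogonal conjugation, hence equals
`∑_I ∏_{i ∈ I} λ_i²`. Since exactly `k` eigenvalues are nonzero, only `I = {i | λ_i ≠ 0}`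
contributes.
-/

open scoped Classical

open Matrix Finset

variable {R : Type*} [CommRing R]

lemma Fintype.sum_subtype_eq_sum_ite {α M : Type*} [Fintype α] [AddCommMonoid M] (p : α → Prop)
    [DecidablePred p] (G : α → M) : ∑ a : {a // p a}, G a = ∑ a, if p a then G a else 0 := by
  rw [← sum_filter]
  exact (sum_subtype _ (by simp) G).symm

lemma Fintype.sum_subtype_sum_subtype_eq_sum_sum_ite {α β M : Type*} [Fintype α] [Fintype β]
    [AddCommMonoid M] (p : α → Prop) (q : β → Prop) [DecidablePred p] [DecidablePred q]
    (F : α → β → M) :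
    ∑ a : {a // p a}, ∑ b : {b // q b}, F a b = ∑ a, ∑ b, if p a ∧ q b then F a b else 0 := by
  rw [Fintype.sum_subtype_eq_sum_ite p fun a => ∑ b : {b // q b}, F a b]
  refine Fintype.sum_congr _ _ fun a => ?_
  by_cases ha : p a
  · simp only [ha, true_and, if_true]
    exact Fintype.sum_subtype_eq_sum_ite q (F a)
  · simp [ha]

lemma StrictMono.eq_of_forall_mem_range {m : Type*} [LinearOrder m] {k : ℕ} {f g : Fin k → m}
    (hf : StrictMono f) (hg : StrictMono g) (h : ∀ i, f i ∈ Set.range g) : f = g := by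
  have hcard : (univ.image g).card = k := by
    rw [card_image_of_injective _ hg.injective, card_univ, Fintype.card_fin]
  exact (orderEmbOfFin_unique hcard (by simpa using h) hf).trans
    (orderEmbOfFin_unique hcard (by simp) hg).symm

lemma Finset.sum_injective_eq_sum_strictMono_sum_perm {m M : Type*} [Fintype m] [LinearOrder m]
    [AddCommMonoid M] {k : ℕ} (F : (Fin k → m) → M) :
    ∑ φ with Function.Injective φ, F φ =
      ∑ f : {f : Fin k → m // StrictMono f}, ∑ σ : Equiv.Perm (Fin k), F (f ∘ σ) := by
  rw [← Fintype.sum_prod_type']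
  symm
  refine Finset.sum_bij (fun p _ => p.1.1 ∘ p.2) ?_ ?_ ?_ fun _ _ => rfl
  · rintro ⟨⟨f, hf⟩, σ⟩ -
    simpa using hf.injective.comp σ.injective
  · rintro ⟨⟨f, hf⟩, σ⟩ - ⟨⟨g, hg⟩, τ⟩ - (h : f ∘ σ = g ∘ τ)
    have hfg : f = g := by
      rw [← hf.range_inj hg, ← EquivLike.range_comp f σ, h, EquivLike.range_comp]
    subst hfg
    have hστ : σ = τ := Equiv.ext fun i => hf.injective (congrFun h i)
    rw [hστ]
  · intro φ hφ
    replace hφ : Function.Injective φ := by simpa using hφ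
    refine ⟨(⟨φ ∘ Tuple.sort φ, (Tuple.monotone_sort φ).strictMono_of_injective
      (hφ.comp (Tuple.sort φ).injective)⟩, (Tuple.sort φ)⁻¹), mem_univ _, ?_⟩
    funext i
    simp

namespace Matrix

variable {m : Type*}

lemma det_mul_eq_sum_prod_mul_det_submatrix {n : Type*} [Fintype m] [Fintype n] [DecidableEq n]
    (B : Matrix n m R) (C : Matrix m n R) :
    (B * C).det = ∑ φ : n → m, (∏ i, B i (φ i)) * (C.submatrix φ id).det := by
  have hrows : B * C = Matrix.of fun i => ∑ x, B i x • C x := by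
    ext i j; simp [Matrix.mul_apply]
  have hsum := (detRowAlternating (R := R) (n := n)).toMultilinearMap.map_sum
    fun i x => B i x • C x
  simp only [AlternatingMap.coe_multilinearMap] at hsum
  rw [hrows, det]
  refine hsum.trans ?_
  refine Finset.sum_congr rfl fun φ _ => ?_
  have hsmul := (detRowAlternating (R := R) (n := n)).toMultilinearMap.map_smul_univ
    (fun i => B i (φ i)) (fun i => C (φ i))
  simp only [AlternatingMap.coe_multilinearMap] at hsmul
  rw [hsmul, smul_eq_mul]
  rfl

variable [LinearOrder m] {k : ℕ}

theorem det_mul_eq_sum_det_submatrix_mul_det_submatrix [Fintype m] (B : Matrix (Fin k) m R)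
    (C : Matrix m (Fin k) R) :
    (B * C).det = ∑ f : {f : Fin k → m // StrictMono f},
      (B.submatrix id f).det * (C.submatrix f id).det := by
  rw [det_mul_eq_sum_prod_mul_det_submatrix,
    ← sum_filter_of_ne (p := Function.Injective) fun φ _ hφ => ?_,
    sum_injective_eq_sum_strictMono_sum_perm]
  · refine Fintype.sum_congr _ _ fun f => ?_
    have hperm (σ : Equiv.Perm (Fin k)) :
        (C.submatrix (f ∘ σ) id).det = Equiv.Perm.sign σ * (C.submatrix f id).det :=
      det_permute σ (C.submatrix f id)
    simp only [hperm, ← mul_assoc, ← sum_mul, ← det_transpose (B.submatrix id f), det_apply']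
    congr 1
    refine Fintype.sum_congr _ _ fun σ => ?_
    simp [mul_comm]
  · by_contra hinj
    obtain ⟨i, j, hij, hne⟩ := Function.not_injective_iff.mp hinj
    exact hφ (by rw [det_zero_of_row_eq hne (by ext; simp [hij]), mul_zero])

variable {l o : Type*} [LinearOrder l] [LinearOrder o]

def compound (k : ℕ) (M : Matrix l m R) :
    Matrix {f : Fin k → l // StrictMono f} {g : Fin k → m // StrictMono g} R :=
  of fun f g => (M.submatrix f.1 g.1).det

lemma compound_apply (M : Matrix l m R) (f : {f : Fin k → l // StrictMono f})
    (g : {g : Fin k → m // StrictMono g}) : compound k M f g = (M.submatrix f.1 g.1).det :=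
  rfl

lemma compound_mul [Fintype m] (M : Matrix l m R) (N : Matrix m o R) :
    compound k (M * N) = compound k M * compound k N := by
  ext f g
  rw [compound_apply, submatrix_mul _ _ f.1 id g.1 Function.bijective_id,
    det_mul_eq_sum_det_submatrix_mul_det_submatrix, mul_apply]
  rfl

lemma compound_transpose (M : Matrix l m R) : compound k Mᵀ = (compound k M)ᵀ := by
  ext f g
  rw [transpose_apply, compound_apply, compound_apply, ← transpose_submatrix, det_transpose]

lemma compound_one : compound k (1 : Matrix m m R) = 1 := by
  ext f g
  rw [compound_apply]
  by_cases hfg : f = g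
  · rw [hfg, submatrix_one _ g.2.injective, det_one, one_apply_eq]
  obtain ⟨i, hi⟩ : ∃ i, f.1 i ∉ Set.range g.1 := by
    by_contra! h
    exact hfg (Subtype.ext (f.2.eq_of_forall_mem_range g.2 h))
  rw [one_apply_ne hfg]
  exact det_eq_zero_of_row_eq_zero i fun j => one_apply_ne fun h => hi ⟨j, h.symm⟩

lemma compound_diagonal (d : m → R) :
    compound k (diagonal d) = diagonal fun f => ∏ i, d (f.1 i) := by
  ext f g
  have hfactor : (diagonal d).submatrix f.1 g.1 =
      (1 : Matrix m m R).submatrix f.1 g.1 * diagonal (d ∘ g.1) := by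
    ext i j
    by_cases h : f.1 i = g.1 j <;> simp [one_apply, h]
  rw [compound_apply, hfactor, det_mul, det_diagonal, ← compound_apply, compound_one,
    diagonal_apply, one_apply]
  split_ifs with h <;> simp [h]

lemma sum_sq_mul_diagonal_mul_transpose {ι κ : Type*} [Fintype ι] [Fintype κ]
    [DecidableEq κ] (V : Matrix ι κ R) (hV : Vᵀ * V = 1) (c : κ → R) :
    ∑ i, ∑ j, (V * diagonal c * Vᵀ) i j ^ 2 = ∑ j, c j ^ 2 := by
  set M := V * diagonal c * Vᵀ
  have hMMt : M * Mᵀ = V * diagonal (c ^ 2) * Vᵀ := by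
    simp only [M, transpose_mul, transpose_transpose, diagonal_transpose, Matrix.mul_assoc]
    rw [← Matrix.mul_assoc Vᵀ V, hV, Matrix.one_mul, ← Matrix.mul_assoc (diagonal c),
      diagonal_mul_diagonal, sq]
    rfl
  calc ∑ i, ∑ j, M i j ^ 2 = trace (M * Mᵀ) := by
        simp only [trace, diag_apply, mul_apply, transpose_apply, sq]
    _ = trace (diagonal (c ^ 2)) := by
        rw [hMMt, trace_mul_cycle, hV, Matrix.one_mul]
    _ = ∑ j, c j ^ 2 := by rw [trace_diagonal]; rfl

end Matrix

lemma sum_strictMono_prod_eq_prod_ne_zero {m : Type*} [Fintype m] [LinearOrder m]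
    {S : Type*} [CommSemiring S] {k : ℕ} (d : m → S)
    (hk : (univ.filter fun i => d i ≠ 0).card = k) :
    ∑ f : {f : Fin k → m // StrictMono f}, ∏ i, d (f.1 i) = ∏ i with d i ≠ 0, d i := by
  set T := univ.filter fun i => d i ≠ 0
  let f₀ : {f : Fin k → m // StrictMono f} :=
    ⟨T.orderEmbOfFin hk, (T.orderEmbOfFin hk).strictMono⟩
  rw [Fintype.sum_eq_single f₀]
  · rw [← image_orderEmbOfFin_univ T hk, prod_image fun i _ j _ h => f₀.2.injective h]
  · intro f hf
    by_contra hprod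
    have hsupp (i : Fin k) : f.1 i ∈ T := by
      simpa [T] using fun h => hprod (prod_eq_zero (mem_univ i) h)
    exact hf (Subtype.ext (orderEmbOfFin_unique hk hsupp f.2))

/-- Pythagoras theorem for pseudo determinants: for a symmetric matrix of rank `k`,
the square of the product of the nonzero eigenvalues equals the sum of the squares of
all `k × k` minors (rows and columns chosen as strictly increasing maps `Fin k → Fin n`,
i.e. `k`-element subsets). -/
theorem stmt_15 {n k : ℕ} (A : Matrix (Fin n) (Fin n) ℝ)
    (hA : A.IsHermitian) (hrank : A.rank = k) :
    (∏ i ∈ Finset.univ.filter (fun i => hA.eigenvalues i ≠ 0), hA.eigenvalues i) ^ 2 =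
      ∑ f : Fin k → Fin n, ∑ g : Fin k → Fin n,
        (if StrictMono f ∧ StrictMono g then (A.submatrix f g).det ^ 2 else 0) := by
  set U : Matrix (Fin n) (Fin n) ℝ := (hA.eigenvectorUnitary : Matrix (Fin n) (Fin n) ℝ)
  have hUU : Uᵀ * U = 1 := Unitary.coe_star_mul_self hA.eigenvectorUnitary
  have hspec : A = U * diagonal hA.eigenvalues * Uᵀ := hA.spectral_theorem
  have hcompound : compound k A =
      compound k U * diagonal (fun f => ∏ i, hA.eigenvalues (f.1 i)) * (compound k U)ᵀ := by
    conv_lhs => rw [hspec]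
    rw [compound_mul, compound_mul, compound_diagonal, compound_transpose]
  have hcard : (univ.filter fun i => hA.eigenvalues i ^ 2 ≠ 0).card = k := by
    rw [← hrank, hA.rank_eq_card_non_zero_eigs, Fintype.card_subtype]
    simp
  have horth : (compound k U)ᵀ * compound k U = 1 := by
    rw [← compound_transpose, ← compound_mul, hUU, compound_one]
  calc (∏ i with hA.eigenvalues i ≠ 0, hA.eigenvalues i) ^ 2
      = ∏ i with hA.eigenvalues i ^ 2 ≠ 0, hA.eigenvalues i ^ 2 := by
        rw [← prod_pow]
        simp
    _ = ∑ f : {f : Fin k → Fin n // StrictMono f}, (∏ i, hA.eigenvalues (f.1 i)) ^ 2 := by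
        rw [← sum_strictMono_prod_eq_prod_ne_zero _ hcard]
        simp only [prod_pow]
    _ = ∑ f : {f : Fin k → Fin n // StrictMono f}, ∑ g : {g : Fin k → Fin n // StrictMono g},
          (A.submatrix f.1 g.1).det ^ 2 := by
        rw [← sum_sq_mul_diagonal_mul_transpose _ horth, ← hcompound]
        rfl
    _ = _ := Fintype.sum_subtype_sum_subtype_eq_sum_sum_ite _ _
          fun f g => (A.submatrix f g).det ^ 2
end

section
/- Generalized Cauchy-Binet: For n×m real matrices F and G, write the characteristic polynomial as det(F^T G - x I) = Σ_k p_k (-x)^{m-k}; then the coefficient p_k of (-x)^{m-k} equals Σ_{|I|=|J|=k} det(F_{IJ}) det(G_{IJ}), summing over all k-element row subsets I ⊆ {1..n} and column subsets J ⊆ {1..m}. -/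
open scoped Classical
open Finset Matrix Polynomial

lemma aux_sum_inj {k n : ℕ} {R : Type*} [AddCommMonoid R] (T : (Fin k → Fin n) → R)
    (h0 : ∀ φ, ¬Function.Injective φ → T φ = 0) :
    ∑ φ : Fin k → Fin n, T φ =
      ∑ f : Fin k → Fin n, if StrictMono f then ∑ σ : Equiv.Perm (Fin k), T (f ∘ σ) else 0 := by
  rw [← Finset.sum_filter]
  have hL : ∑ φ : Fin k → Fin n, T φ
      = ∑ φ ∈ Finset.univ.filter (fun φ => Function.Injective φ), T φ := by
    refine (Finset.sum_subset (Finset.filter_subset _ _) fun φ _ hφ => ?_).symm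
    exact h0 φ (by simpa using hφ)
  rw [hL, ← Finset.sum_product']
  refine (Finset.sum_bij (fun p _ => p.1 ∘ p.2) ?_ ?_ ?_ ?_).symm
  · rintro ⟨f, σ⟩ hp
    simp only [Finset.mem_product, Finset.mem_filter, Finset.mem_univ, true_and] at hp ⊢
    exact hp.1.injective.comp σ.injective
  · rintro ⟨f, σ⟩ hp ⟨f', σ'⟩ hp' h
    simp only [Finset.mem_product, Finset.mem_filter, Finset.mem_univ, true_and] at hp hp'
    have h' : f ∘ σ = f' ∘ σ' := h
    have hr : Set.range f = Set.range f' := by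
      rw [← σ.surjective.range_comp f, ← σ'.surjective.range_comp f', h']
    haveI : WellFoundedLT (Fin k) := inferInstance
    have hf : f = f' := (hp.1.range_inj hp'.1).mp hr
    subst hf
    have hσ : σ = σ' := by
      ext i
      exact congrArg _ (hp.1.injective (congrFun h' i))
    simp [hσ]
  · intro φ hφ
    simp only [Finset.mem_filter, Finset.mem_univ, true_and] at hφ
    set s : Finset (Fin n) := Finset.image φ Finset.univ with hs
    have hc : s.card = k := by
      rw [hs, Finset.card_image_of_injective _ hφ, Finset.card_univ, Fintype.card_fin]
    have hmem : ∀ i, φ i ∈ s := fun i => Finset.mem_image_of_mem φ (Finset.mem_univ i)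
    set e : Fin k ≃o s := s.orderIsoOfFin hc with he
    have hσinj : Function.Injective (fun i => e.symm ⟨φ i, hmem i⟩) := by
      intro a b hab
      apply hφ
      have h2 : (⟨φ a, hmem a⟩ : s) = ⟨φ b, hmem b⟩ := e.symm.injective hab
      exact congrArg Subtype.val h2
    have hσbij := (Finite.injective_iff_bijective).mp hσinj
    refine ⟨⟨s.orderEmbOfFin hc, Equiv.ofBijective _ hσbij⟩, ?_, ?_⟩
    · simp only [Finset.mem_product, Finset.mem_filter, Finset.mem_univ, true_and]
      exact ⟨(s.orderEmbOfFin hc).strictMono, trivial⟩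
    · funext i
      simp only [Function.comp_apply, Equiv.ofBijective_apply]
      rw [← Finset.coe_orderIsoOfFin_apply s hc]
      simp [he]
  · intros; rfl


lemma cauchyBinet {n k : ℕ} (A B : Matrix (Fin n) (Fin k) ℝ) :
    (Aᵀ * B).det = ∑ f : Fin k → Fin n,
      if StrictMono f then (A.submatrix f id).det * (B.submatrix f id).det else 0 := by
  have h1 : (Aᵀ * B).det = ∑ r : Fin k → Fin n, (∏ i, A (r i) i) * (B.submatrix r id).det := by
    have hM : Aᵀ * B = Matrix.of fun i => ∑ l, A l i • B l := by
      ext i j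
      simp [Matrix.mul_apply, Finset.sum_apply]
    rw [hM]
    have h2 := (Matrix.detRowAlternating (R := ℝ) (n := Fin k)).toMultilinearMap.map_sum
      (g := fun i l => A l i • B l)
    simp only [AlternatingMap.coe_multilinearMap] at h2
    rw [show (Matrix.of fun i => ∑ l, A l i • B l).det
        = Matrix.detRowAlternating (fun i => ∑ l, A l i • B l) from rfl, h2]
    refine Finset.sum_congr rfl fun r _ => ?_
    have h3 := (Matrix.detRowAlternating (R := ℝ) (n := Fin k)).toMultilinearMap.map_smul_univ
      (fun i => A (r i) i) (fun i => B (r i))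
    simp only [AlternatingMap.coe_multilinearMap] at h3
    rw [h3, smul_eq_mul]
    rfl
  rw [h1]
  rw [aux_sum_inj (fun r => (∏ i, A (r i) i) * (B.submatrix r id).det)
    (fun φ hφ => ?_)]
  · refine Finset.sum_congr rfl fun f _ => ?_
    split_ifs with hf
    · have hterm : ∀ σ : Equiv.Perm (Fin k),
          (∏ i, A ((f ∘ σ) i) i) * (B.submatrix (f ∘ σ) id).det
            = Equiv.Perm.sign σ * (∏ i, (A.submatrix f id) (σ i) i) * (B.submatrix f id).det := by
        intro σ
        have : B.submatrix (f ∘ σ) id = (B.submatrix f id).submatrix σ id := by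
          simp [Matrix.submatrix_submatrix]
        rw [this, Matrix.det_permute]
        simp [Matrix.submatrix_apply]
        ring
      rw [Finset.sum_congr rfl fun σ _ => hterm σ]
      rw [← Finset.sum_mul]
      congr 1
      rw [Matrix.det_apply']
    · rfl
  · obtain ⟨i, j, hij, hpij⟩ : ∃ i j, i ≠ j ∧ φ i = φ j := by
      simp only [Function.Injective, not_forall] at hφ
      obtain ⟨i, j, h1', h2'⟩ := hφ
      exact ⟨i, j, h2', h1'⟩
    have : (B.submatrix φ id).det = 0 :=
      Matrix.det_zero_of_row_eq hij (by ext c; simp [hpij])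
    simp [this]


lemma det_piece {m : ℕ} (M : Matrix (Fin m) (Fin m) ℝ) (s : Finset (Fin m)) :
    Matrix.detRowAlternating
      (s.piecewise (fun i => (Matrix.diagonal (fun _ => (X : ℝ[X]))) i)
        (fun i => (-(M.map Polynomial.C)) i))
    = X ^ s.card * Polynomial.C ((-1 : ℝ) ^ (m - s.card) *
        (M.submatrix (fun i : {x // x ∉ s} => (i : Fin m))
          (fun i : {x // x ∉ s} => (i : Fin m))).det) := by
  set P : Matrix (Fin m) (Fin m) ℝ[X] :=
    Matrix.of (s.piecewise (fun i => (Matrix.diagonal (fun _ => (X : ℝ[X]))) i)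
      (fun i => (-(M.map Polynomial.C)) i)) with hP
  have hdet : Matrix.detRowAlternating
      (s.piecewise (fun i => (Matrix.diagonal (fun _ => (X : ℝ[X]))) i)
        (fun i => (-(M.map Polynomial.C)) i)) = P.det := rfl
  rw [hdet]
  set e : {x // x ∈ s} ⊕ {x // x ∉ s} ≃ Fin m := Equiv.sumCompl (· ∈ s) with he
  have h1 : P.det = (P.submatrix e e).det := (Matrix.det_submatrix_equiv_self e P).symm
  have h2 : P.submatrix e e = Matrix.fromBlocks
      (Matrix.diagonal (fun _ => (X : ℝ[X]))) 0
      (Matrix.of fun (i : {x // x ∉ s}) (j : {x // x ∈ s}) => -Polynomial.C (M i j))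
      (Matrix.of fun (i j : {x // x ∉ s}) => -Polynomial.C (M i j)) := by
    ext i j
    cases i with
    | inl i =>
      cases j with
      | inl j =>
        simp only [Matrix.submatrix_apply, he, Equiv.sumCompl_apply_inl, hP, Matrix.of_apply,
          Finset.piecewise_eq_of_mem _ _ _ i.2, Matrix.fromBlocks_apply₁₁]
        by_cases hij : i = j
        · subst hij; simp
        · rw [Matrix.diagonal_apply_ne _ (fun h => hij (Subtype.ext h)),
            Matrix.diagonal_apply_ne _ hij]
      | inr j =>
        have hij : ((i : Fin m)) ≠ ((j : Fin m)) := fun h => j.2 (h ▸ i.2)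
        simp [Matrix.submatrix_apply, he, hP,
          Finset.piecewise_eq_of_mem _ _ _ i.2, Matrix.diagonal_apply_ne _ hij]
    | inr i =>
      cases j with
      | inl j =>
        simp [Matrix.submatrix_apply, he, hP, Finset.piecewise_eq_of_notMem _ _ _ i.2]
      | inr j =>
        simp [Matrix.submatrix_apply, he, hP, Finset.piecewise_eq_of_notMem _ _ _ i.2]
  rw [h1, h2, Matrix.det_fromBlocks_zero₁₂, Matrix.det_diagonal, Finset.prod_const]
  congr 1
  · rw [Finset.card_univ, Fintype.card_coe]
  · have hmap : (Matrix.of fun (i j : {x // x ∉ s}) => -Polynomial.C (M i j))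
        = ((-M).submatrix (fun i : {x // x ∉ s} => (i : Fin m))
            (fun i : {x // x ∉ s} => (i : Fin m))).map Polynomial.C := by
      ext i j; simp
    rw [hmap]
    rw [show ((-M).submatrix (fun i : {x // x ∉ s} => (i : Fin m))
        (fun i : {x // x ∉ s} => (i : Fin m))).map Polynomial.C
      = (Polynomial.C : ℝ →+* ℝ[X]).mapMatrix ((-M).submatrix
          (fun i : {x // x ∉ s} => (i : Fin m)) (fun i : {x // x ∉ s} => (i : Fin m))) from rfl]
    rw [← RingHom.map_det]
    rw [show ((-M).submatrix (fun i : {x // x ∉ s} => (i : Fin m))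
        (fun i : {x // x ∉ s} => (i : Fin m)))
      = -(M.submatrix (fun i : {x // x ∉ s} => (i : Fin m))
          (fun i : {x // x ∉ s} => (i : Fin m))) from by ext i j; simp]
    rw [Matrix.det_neg]
    rw [Fintype.card_subtype_compl, Fintype.card_fin, Fintype.card_coe]

lemma charpoly_minors {m k : ℕ} (hk : k ≤ m) (M : Matrix (Fin m) (Fin m) ℝ) :
    M.charpoly.coeff (m - k) =
      (-1 : ℝ) ^ k * ∑ g : Fin k → Fin m,
        if StrictMono g then (M.submatrix g g).det else 0 := by
  -- expand the determinant of the charmatrix over subsets of rows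
  have hrow : Matrix.charmatrix M = Matrix.of
      ((fun i => (Matrix.diagonal (fun _ => (X : ℝ[X]))) i)
        + (fun i => (-(M.map Polynomial.C)) i)) := by
    ext i j
    simp [Matrix.charmatrix_apply, sub_eq_add_neg]
  have hdet : M.charpoly = ∑ s : Finset (Fin m),
      X ^ s.card * Polynomial.C ((-1 : ℝ) ^ (m - s.card) *
        (M.submatrix (fun i : {x // x ∉ s} => (i : Fin m))
          (fun i : {x // x ∉ s} => (i : Fin m))).det) := by
    rw [Matrix.charpoly, hrow]
    rw [show (Matrix.of ((fun i => (Matrix.diagonal (fun _ => (X : ℝ[X]))) i)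
        + (fun i => (-(M.map Polynomial.C)) i))).det
      = Matrix.detRowAlternating ((fun i => (Matrix.diagonal (fun _ => (X : ℝ[X]))) i)
        + (fun i => (-(M.map Polynomial.C)) i)) from rfl]
    have := (Matrix.detRowAlternating (R := ℝ[X]) (n := Fin m)).toMultilinearMap.map_add_univ
      (fun i => (Matrix.diagonal (fun _ => (X : ℝ[X]))) i)
      (fun i => (-(M.map Polynomial.C)) i)
    simp only [AlternatingMap.coe_multilinearMap] at this
    rw [this]
    exact Finset.sum_congr rfl fun s _ => det_piece M s
  -- take the coefficient
  have hco : M.charpoly.coeff (m - k) = ∑ s : Finset (Fin m),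
      if s.card = m - k then ((-1 : ℝ) ^ (m - s.card) *
        (M.submatrix (fun i : {x // x ∉ s} => (i : Fin m))
          (fun i : {x // x ∉ s} => (i : Fin m))).det) else 0 := by
    rw [hdet, Polynomial.finset_sum_coeff]
    refine Finset.sum_congr rfl fun s _ => ?_
    rw [mul_comm, Polynomial.C_mul_X_pow_eq_monomial, Polynomial.coeff_monomial]
  rw [hco, ← Finset.sum_filter, Finset.mul_sum]
  simp only [mul_ite, mul_zero]
  rw [← Finset.sum_filter]
  refine (Finset.sum_bij (fun (g : Fin k → Fin m) _ => (Finset.image g Finset.univ)ᶜ)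
    ?_ ?_ ?_ ?_).symm
  · intro g hg
    simp only [Finset.mem_filter, Finset.mem_univ, true_and] at hg ⊢
    rw [Finset.card_compl, Finset.card_image_of_injective _ hg.injective,
      Finset.card_univ, Fintype.card_fin, Fintype.card_fin]
  · intro g hg g' hg' h
    simp only [Finset.mem_filter, Finset.mem_univ, true_and] at hg hg'
    have himg : Finset.image g Finset.univ = Finset.image g' Finset.univ :=
      compl_injective h
    have hr : Set.range g = Set.range g' := by
      rw [← Set.image_univ, ← Set.image_univ, ← Finset.coe_univ, ← Finset.coe_image,
        ← Finset.coe_image, himg]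
    haveI : WellFoundedLT (Fin k) := inferInstance
    exact (hg.range_inj hg').mp hr
  · intro s hs
    simp only [Finset.mem_filter, Finset.mem_univ, true_and] at hs
    have hct : sᶜ.card = k := by
      rw [Finset.card_compl, hs, Fintype.card_fin]
      omega
    refine ⟨sᶜ.orderEmbOfFin hct, ?_, ?_⟩
    · simp only [Finset.mem_filter, Finset.mem_univ, true_and]
      exact (sᶜ.orderEmbOfFin hct).strictMono
    · have : Finset.image (sᶜ.orderEmbOfFin hct) Finset.univ = sᶜ := by
        apply Finset.coe_injective
        rw [Finset.coe_image, Finset.coe_univ, Set.image_univ]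
        exact Finset.range_orderEmbOfFin _ _
      show (Finset.image (⇑(sᶜ.orderEmbOfFin hct)) Finset.univ)ᶜ = s
      rw [this, compl_compl]
  · intro g hg
    simp only [Finset.mem_filter, Finset.mem_univ, true_and] at hg
    set s := (Finset.image g Finset.univ)ᶜ with hsdef
    have hmk : m - s.card = k := by
      rw [hsdef, Finset.card_compl, Finset.card_image_of_injective _ hg.injective,
        Finset.card_univ, Fintype.card_fin, Fintype.card_fin]
      omega
    have hmem : ∀ i, g i ∉ s := by
      intro i
      simp [hsdef]
    have hcard : Fintype.card {x // x ∉ s} = k := by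
      rw [Fintype.card_subtype_compl, Fintype.card_fin, Fintype.card_coe, hsdef,
        Finset.card_compl, Finset.card_image_of_injective _ hg.injective,
        Finset.card_univ, Fintype.card_fin, Fintype.card_fin]
      omega
    have hinj : Function.Injective (fun i : Fin k => (⟨g i, hmem i⟩ : {x // x ∉ s})) := by
      intro a b hab
      exact hg.injective (congrArg Subtype.val hab)
    have hbij : Function.Bijective (fun i : Fin k => (⟨g i, hmem i⟩ : {x // x ∉ s})) :=
      (Fintype.bijective_iff_injective_and_card _).mpr ⟨hinj, by rw [hcard, Fintype.card_fin]⟩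
    set e : Fin k ≃ {x // x ∉ s} := Equiv.ofBijective _ hbij with hedef
    have hdetEq : (M.submatrix (fun i : {x // x ∉ s} => (i : Fin m))
        (fun i : {x // x ∉ s} => (i : Fin m))).det = (M.submatrix g g).det := by
      rw [← Matrix.det_submatrix_equiv_self e, Matrix.submatrix_submatrix]
      congr 1
    rw [hmk, hdetEq]


/-- Generalized Cauchy–Binet: for `n × m` matrices `F, G`, the coefficient of the
characteristic polynomial of `Fᵀ * G` satisfies
`charpoly.coeff (m - k) = (-1)^k Σ_{|I|=|J|=k} det F_{IJ} det G_{IJ}`,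
where subsets are encoded as strictly increasing maps `Fin k → Fin n`, `Fin k → Fin m`. -/
theorem stmt_16 {n m k : ℕ} (hk : k ≤ m) (F G : Matrix (Fin n) (Fin m) ℝ) :
    (F.transpose * G).charpoly.coeff (m - k) =
      (-1 : ℝ) ^ k * ∑ f : Fin k → Fin n, ∑ g : Fin k → Fin m,
        (if StrictMono f ∧ StrictMono g then
          (F.submatrix f g).det * (G.submatrix f g).det else 0) := by
  rw [charpoly_minors hk]
  congr 1
  rw [Finset.sum_comm]
  refine Finset.sum_congr rfl fun g _ => ?_
  by_cases hg : StrictMono g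
  · rw [if_pos hg]
    have hprod : (F.transpose * G).submatrix g g
        = (F.submatrix id g)ᵀ * (G.submatrix id g) := by
      ext i j; simp [Matrix.mul_apply]
    rw [hprod, cauchyBinet]
    refine Finset.sum_congr rfl fun f _ => ?_
    simp only [Matrix.submatrix_submatrix, Function.comp_id, Function.id_comp]
    by_cases hf : StrictMono f <;> simp [hf, hg]
  · rw [if_neg hg]
    symm
    apply Finset.sum_eq_zero
    intro f _
    simp [hg]
end
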